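/- Let $(X,Y)$ be a random pair with $X \in \mathcal{X}$ and $Y \in \{-1,1\}$, and let $f, g : \mathcal{X} \to \mathbb{R}$ be bounded measurable functions. Then $|\mathcal{R}(\mathrm{sign}\, f) - \mathcal{R}(\mathrm{sign}\, g)| \le \mathbb{P}(\|f - g\|_{L^\infty(\rho_X)} \ge |f(X)|)$, where $\mathcal{R}(c) = \mathbb{P}(c(X) \ne Y)$. -/

import Mathlib

open MeasureTheory

noncomputable def rsign (t : ℝ) : ℝ := if 0 < t then 1 else if t < 0 then -1 else 0

/-! If `sign a ≠ sign b`, then `b` is at distance at least `|a|` from `a`; so `sign f(X)` and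
`sign g(X)` can only disagree where `|f(X)| ≤ |f(X) - g(X)| ≤ ‖f - g‖_{L^∞(ρ_X)}`, and a change of
classifier changes the risk by at most the probability of such a disagreement. -/

lemma abs_le_abs_sub_of_rsign_ne {a b : ℝ} (h : rsign a ≠ rsign b) : |a| ≤ |a - b| := by
  unfold rsign at h
  split_ifs at h <;>
    first
    | exact absurd rfl h
    | cases abs_cases a <;> cases abs_cases (a - b) <;> linarith

open scoped symmDiff in
lemma setOf_ne_symmDiff_setOf_ne_subset {α β : Type*} (a b c : α → β) :
    {x | a x ≠ c x} ∆ {x | b x ≠ c x} ⊆ {x | a x ≠ b x} := by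
  intro x hx hab
  simp only [Set.mem_symmDiff, Set.mem_ofPred_eq, hab] at hx
  tauto

open scoped symmDiff in
lemma abs_measureReal_sub_le_of_symmDiff_subset {α : Type*} [MeasurableSpace α] {μ : Measure α}
    [IsFiniteMeasure μ] {s t u : Set α} (h : s ∆ t ⊆ u) :
    |μ.real s - μ.real t| ≤ μ.real u := by
  have key : ∀ {a b : Set α}, a ∆ b ⊆ u → μ.real a ≤ μ.real u + μ.real b := fun hab =>
    (measureReal_mono ((le_symmDiff_sup_right _ _).trans (sup_le_sup_right hab _))).trans
      (measureReal_union_le _ _)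
  exact abs_sub_le_iff.2 ⟨by linarith [key h], by linarith [key (symmDiff_comm s t ▸ h)]⟩

lemma ae_enorm_comp_le_eLpNorm_top_map {Ω 𝓧 ε : Type*} [MeasurableSpace Ω] [MeasurableSpace 𝓧]
    [ENorm ε] {μ : Measure Ω} {X : Ω → 𝓧} (hX : AEMeasurable X μ) (h : 𝓧 → ε) :
    ∀ᵐ ω ∂μ, ‖h (X ω)‖ₑ ≤ eLpNorm h ⊤ (μ.map X) :=
  ae_of_ae_map hX (by simpa only [eLpNorm_exponent_top] using enorm_ae_le_eLpNormEssSup h _)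

theorem risk_diff_le_prob_small_margin_general
    {Ω 𝓧 : Type*} [MeasurableSpace Ω] [MeasurableSpace 𝓧]
    (ℙ : Measure Ω) [IsProbabilityMeasure ℙ]
    (X : Ω → 𝓧) (Y : Ω → ℝ) (hX : Measurable X)
    (f g : 𝓧 → ℝ) :
    |(ℙ {ω | rsign (f (X ω)) ≠ Y ω}).toReal - (ℙ {ω | rsign (g (X ω)) ≠ Y ω}).toReal| ≤
      (ℙ {ω | ENNReal.ofReal |f (X ω)| ≤
          eLpNorm (fun x => f x - g x) ⊤ (Measure.map X ℙ)}).toReal := by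
  set C := eLpNorm (fun x => f x - g x) ⊤ (Measure.map X ℙ)
  have hdisagree : ℙ {ω | rsign (f (X ω)) ≠ rsign (g (X ω))} ≤
      ℙ {ω | ENNReal.ofReal |f (X ω)| ≤ C} := by
    refine measure_mono_ae ?_
    filter_upwards [ae_enorm_comp_le_eLpNorm_top_map hX.aemeasurable (fun x => f x - g x)]
      with ω hω hne
    calc ENNReal.ofReal |f (X ω)|
        ≤ ENNReal.ofReal |f (X ω) - g (X ω)| :=
          ENNReal.ofReal_le_ofReal (abs_le_abs_sub_of_rsign_ne hne)
      _ = ‖f (X ω) - g (X ω)‖ₑ := (Real.enorm_eq_ofReal_abs _).symm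
      _ ≤ C := hω
  calc _ ≤ ℙ.real {ω | rsign (f (X ω)) ≠ rsign (g (X ω))} :=
        abs_measureReal_sub_le_of_symmDiff_subset (setOf_ne_symmDiff_setOf_ne_subset _ _ _)
    _ ≤ _ := ENNReal.toReal_mono (measure_ne_top _ _) hdisagree

/-- The difference of misclassification risks of `sign f` and `sign g` is bounded by the
probability that `|f(X)|` is below the `L^∞(ρ_X)` distance between `f` and `g`. -/
theorem risk_diff_le_prob_small_margin
    {Ω 𝓧 : Type*} [MeasurableSpace Ω] [MeasurableSpace 𝓧]
    (ℙ : Measure Ω) [IsProbabilityMeasure ℙ]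
    (X : Ω → 𝓧) (Y : Ω → ℝ) (hX : Measurable X)
    (hY : ∀ ω, Y ω = 1 ∨ Y ω = -1)
    (f g : 𝓧 → ℝ) (hf : Measurable f) (hg : Measurable g)
    (Cf : ℝ) (hfb : ∀ x, |f x| ≤ Cf) (Cg : ℝ) (hgb : ∀ x, |g x| ≤ Cg) :
    |(ℙ {ω | rsign (f (X ω)) ≠ Y ω}).toReal - (ℙ {ω | rsign (g (X ω)) ≠ Y ω}).toReal| ≤
      (ℙ {ω | ENNReal.ofReal |f (X ω)| ≤
          eLpNorm (fun x => f x - g x) ⊤ (Measure.map X ℙ)}).toReal :=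
  risk_diff_le_prob_small_margin_general ℙ X Y hX f g
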